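/- Consider the θ-parameterized networked control causal factorization over a horizon T with finite alphabets, in which the joint policy π_{θ,t}(u_t, s_t | z^t, s^{t-1}, u^{t-1}) replaces π^e_t · π^c_t. Assume that all kernels P_Y, P_X, P_Z take strictly positive values, that π_{θ,t}(u_t, s_t | z^t, s^{t-1}, u^{t-1}) > 0 for all arguments and every θ ∈ ℝ, and that θ ↦ π_{θ,t}(u_t, s_t | z^t, s^{t-1}, u^{t-1}) is differentiable for all arguments. Let c : 𝕏 × 𝕌 → ℝ, λ ∈ ℝ, and define the information cost c_{i,θ}(s_t, y^{t-1}, s^{t-1}, u^{t-1}) = log( P_θ(S_t = s_t | Y^{t-1} = y^{t-1}, S^{t-1} = s^{t-1}, U^{t-1} = u^{t-1}) / P_θ(S_t = s_t | S^{t-1} = s^{t-1}, U^{t-1} = u^{t-1}) ), where P_θ denotes the joint pmf induced by the policies π_{θ,t}. Then for every θ₀ ∈ ℝ, the derivative at θ₀ of the map θ ↦ E_θ[ Σ_{t=1}^T ( c(X_t, U_t) + λ · c_{i,θ}(S_t, Y^{t-1}, S^{t-1}, U^{t-1}) ) ] equals E_{θ₀}[ ( Σ_{t=1}^T ( c(X_t,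 U_t) + λ · c_{i,θ₀}(S_t, Y^{t-1}, S^{t-1}, U^{t-1}) ) ) · ( Σ_{t=1}^T d/dθ|_{θ=θ₀} log π_{θ,t}(U_t, S_t | Z^t, S^{t-1}, U^{t-1}) ) ]. -/

import Mathlib

open scoped BigOperators Classical

noncomputable section

namespace NCS

/-- Probability of an event under a pmf `P` on a finite sample space. -/
def pr {Ω : Type} [Fintype Ω] (P : Ω → ℝ) (E : Ω → Prop) : ℝ :=
  ∑ ω, if E ω then P ω else 0

/-- Conditional probability `P(E | F)`, as a ratio of probabilities. -/
def condPr {Ω : Type} [Fintype Ω] (P : Ω → ℝ) (E F : Ω → Prop) : ℝ :=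
  pr P (fun ω => E ω ∧ F ω) / pr P F

/-- Mutual information `I(f ; g)` between two finitely-valued random variables
`f` and `g` defined on a finite sample space with pmf `P` (natural logarithm;
summands with zero probability vanish since `0 * log _ = 0`). -/
def MI {Ω A B : Type} [Fintype Ω] [Fintype A] [Fintype B]
    (P : Ω → ℝ) (f : Ω → A) (g : Ω → B) : ℝ :=
  ∑ a : A, ∑ b : B,
    pr P (fun ω => f ω = a ∧ g ω = b) *
      Real.log (pr P (fun ω => f ω = a ∧ g ω = b) /
        (pr P (fun ω => f ω = a) * pr P (fun ω => g ω = b)))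

/-- Conditional mutual information `I(f ; g | h)`. -/
def condMI {Ω A B C : Type} [Fintype Ω] [Fintype A] [Fintype B] [Fintype C]
    (P : Ω → ℝ) (f : Ω → A) (g : Ω → B) (h : Ω → C) : ℝ :=
  ∑ a : A, ∑ b : B, ∑ c : C,
    pr P (fun ω => f ω = a ∧ g ω = b ∧ h ω = c) *
      Real.log (condPr P (fun ω => f ω = a ∧ g ω = b) (fun ω => h ω = c) /
        (condPr P (fun ω => f ω = a) (fun ω => h ω = c) *
          condPr P (fun ω => g ω = b) (fun ω => h ω = c)))


/-! ### The networked control causal factorization -/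

variable {T : ℕ} {X Y Z S U : Type}

/-- The strict history `a^{t-1} = (a_1, …, a_{t-1})` of a trajectory (0-indexed). -/
def hist {A : Type} (f : Fin T → A) (t : Fin T) : Fin t.1 → A :=
  fun i => f ⟨i.1, lt_trans i.2 t.2⟩

/-- The inclusive history `a^t = (a_1, …, a_t)` of a trajectory (0-indexed). -/
def histIncl {A : Type} (f : Fin T → A) (t : Fin T) : Fin (t.1 + 1) → A :=
  fun i => f ⟨i.1, lt_of_le_of_lt (Nat.lt_succ_iff.mp i.2) t.2⟩

/-- Drop the last entry of a history. -/
def trunc {A : Type} {n : ℕ} (f : Fin (n + 1) → A) : Fin n → A :=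
  fun i => f ⟨i.1, Nat.lt_succ_of_lt i.2⟩

/-- The previous value `a_{t-1}`, or `none` at the initial time (vacuous conditioning). -/
def prevO {A : Type} (f : Fin T → A) (t : Fin T) : Option A :=
  if t.1 = 0 then none
  else some (f ⟨t.1 - 1, lt_of_le_of_lt (Nat.sub_le _ _) t.2⟩)

/-- The previous triple `(x_{t-1}, y_{t-1}, u_{t-1})`, or `none` at the initial time. -/
def prev3 (x : Fin T → X) (y : Fin T → Y) (u : Fin T → U) (t : Fin T) :
    Option (X × Y × U) :=
  if t.1 = 0 then none
  else some (x ⟨t.1 - 1, lt_of_le_of_lt (Nat.sub_le _ _) t.2⟩,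
             y ⟨t.1 - 1, lt_of_le_of_lt (Nat.sub_le _ _) t.2⟩,
             u ⟨t.1 - 1, lt_of_le_of_lt (Nat.sub_le _ _) t.2⟩)

/-- The fixed conditional pmfs (kernels) `P_Y(y_t | y_{t-1})`,
`P_X(x_t | x_{t-1}, y_{t-1}, u_{t-1})`, `P_Z(z_t | x_t)`; conditioning on `none`
encodes the vacuous conditioning at `t = 1`. -/
structure Kernels (X Y Z U : Type) [Fintype X] [Fintype Y] [Fintype Z] [Fintype U] where
  PY : Option Y → Y → ℝ
  PX : Option (X × Y × U) → X → ℝ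
  PZ : X → Z → ℝ
  PY_nonneg : ∀ p y, 0 ≤ PY p y
  PY_sum : ∀ p, ∑ y, PY p y = 1
  PX_nonneg : ∀ p x, 0 ≤ PX p x
  PX_sum : ∀ p, ∑ x, PX p x = 1
  PZ_nonneg : ∀ x z, 0 ≤ PZ x z
  PZ_sum : ∀ x, ∑ z, PZ x z = 1

/-- A quantizer policy family `π^e_t(s_t | z^t, s^{t-1}, u^{t-1})`. -/
def QPol (T : ℕ) (Z S U : Type) : Type :=
  (t : Fin T) → (Fin (t.1 + 1) → Z) → (Fin t.1 → S) → (Fin t.1 → U) → S → ℝ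

/-- A controller policy family `π^c_t(u_t | s^t, u^{t-1})`. -/
def CPol (T : ℕ) (S U : Type) : Type :=
  (t : Fin T) → (Fin (t.1 + 1) → S) → (Fin t.1 → U) → U → ℝ

/-- `π^e` is a family of conditional pmfs. -/
def IsQPol [Fintype S] (πe : QPol T Z S U) : Prop :=
  (∀ t zs ss us st, 0 ≤ πe t zs ss us st) ∧ (∀ t zs ss us, ∑ st, πe t zs ss us st = 1)

/-- `π^c` is a family of conditional pmfs. -/
def IsCPol [Fintype U] (πc : CPol T S U) : Prop :=
  (∀ t ss us ut, 0 ≤ πc t ss us ut) ∧ (∀ t ss us, ∑ ut, πc t ss us ut = 1)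

/-- The sample space of full trajectories `(x^T, y^T, z^T, s^T, u^T)`. -/
abbrev Traj (T : ℕ) (X Y Z S U : Type) : Type :=
  (Fin T → X) × (Fin T → Y) × (Fin T → Z) × (Fin T → S) × (Fin T → U)

def trX (ω : Traj T X Y Z S U) : Fin T → X := ω.1
def trY (ω : Traj T X Y Z S U) : Fin T → Y := ω.2.1
def trZ (ω : Traj T X Y Z S U) : Fin T → Z := ω.2.2.1
def trS (ω : Traj T X Y Z S U) : Fin T → S := ω.2.2.2.1
def trU (ω : Traj T X Y Z S U) : Fin T → U := ω.2.2.2.2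

variable [Fintype X] [Fintype Y] [Fintype Z] [Fintype S] [Fintype U]

/-- The joint pmf of the networked control causal factorization:
`P(x^T, y^T, z^T, s^T, u^T) = ∏_t P_Y(y_t|y_{t-1}) P_X(x_t|x_{t-1},y_{t-1},u_{t-1})
P_Z(z_t|x_t) π^e_t(s_t|z^t,s^{t-1},u^{t-1}) π^c_t(u_t|s^t,u^{t-1})`. -/
def joint (K : Kernels X Y Z U) (πe : QPol T Z S U) (πc : CPol T S U) :
    Traj T X Y Z S U → ℝ :=
  fun (x, y, z, s, u) =>
    ∏ t : Fin T,
      K.PY (prevO y t) (y t) *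
      K.PX (prev3 x y u t) (x t) *
      K.PZ (x t) (z t) *
      πe t (histIncl z t) (hist s t) (hist u t) (s t) *
      πc t (histIncl s t) (hist u t) (u t)


/-- A joint quantizer-controller policy family `π_t(u_t, s_t | z^t, s^{t-1}, u^{t-1})`. -/
def JPol (T : ℕ) (Z S U : Type) : Type :=
  (t : Fin T) → (Fin (t.1 + 1) → Z) → (Fin t.1 → S) → (Fin t.1 → U) → U × S → ℝ

/-- The joint pmf of the θ-parameterized networked control causal factorization. -/
def jointP (K : Kernels X Y Z U) (π : ℝ → JPol T Z S U) (θ : ℝ) :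
    Traj T X Y Z S U → ℝ :=
  fun (x, y, z, s, u) =>
    ∏ t : Fin T,
      K.PY (prevO y t) (y t) *
      K.PX (prev3 x y u t) (x t) *
      K.PZ (x t) (z t) *
      π θ t (histIncl z t) (hist s t) (hist u t) (u t, s t)

/-- The information cost
`c_{i,θ}(s_t, y^{t-1}, s^{t-1}, u^{t-1}) =
log( P_θ(S_t = s_t | Y^{t-1}, S^{t-1}, U^{t-1}) / P_θ(S_t = s_t | S^{t-1}, U^{t-1}) )`,
evaluated along the trajectory `ω`. -/
def cinfo (K : Kernels X Y Z U) (π : ℝ → JPol T Z S U) (θ : ℝ) (t : Fin T)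
    (ω : Traj T X Y Z S U) : ℝ :=
  Real.log (
    condPr (jointP K π θ)
      (fun ω' => trS ω' t = trS ω t)
      (fun ω' => hist (trY ω') t = hist (trY ω) t ∧ hist (trS ω') t = hist (trS ω) t ∧
        hist (trU ω') t = hist (trU ω) t) /
    condPr (jointP K π θ)
      (fun ω' => trS ω' t = trS ω t)
      (fun ω' => hist (trS ω') t = hist (trS ω) t ∧ hist (trU ω') t = hist (trU ω) t))



/-! ### Auxiliary machinery for the policy-gradient theorem -/

section PrHelpers
variable {Ω : Type} [Fintype Ω]

lemma pr_congr (P : Ω → ℝ) {E E' : Ω → Prop} (h : ∀ ω, E ω ↔ E' ω) :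
    pr P E = pr P E' := by
  unfold pr
  refine Finset.sum_congr rfl fun ω _ => ?_
  by_cases hE : E ω
  · simp [hE, (h ω).mp hE]
  · have hE' : ¬ E' ω := fun h' => hE ((h ω).mpr h')
    simp [hE, hE']

lemma pr_pos {P : Ω → ℝ} (hP : ∀ ω, 0 < P ω) {E : Ω → Prop} (hE : ∃ ω, E ω) :
    0 < pr P E := by
  obtain ⟨ω0, h0⟩ := hE
  have hle : (if E ω0 then P ω0 else 0) ≤ pr P E :=
    Finset.single_le_sum (f := fun ω => if E ω then P ω else 0)
      (fun ω _ => by by_cases h : E ω <;> simp [h, (hP ω).le]) (Finset.mem_univ ω0)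
  calc (0:ℝ) < P ω0 := hP ω0
    _ = (if E ω0 then P ω0 else 0) := by simp [h0]
    _ ≤ pr P E := hle

lemma hasDerivAt_pr {P : ℝ → Ω → ℝ} {P' : Ω → ℝ} {θ : ℝ}
    (h : ∀ ω, HasDerivAt (fun θ => P θ ω) (P' ω) θ) (E : Ω → Prop) :
    HasDerivAt (fun θ => pr (P θ) E) (pr P' E) θ := by
  unfold pr
  refine HasDerivAt.fun_sum fun ω _ => ?_
  by_cases hE : E ω
  · simpa [hE] using h ω
  · simpa [hE] using hasDerivAt_const θ (0 : ℝ)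

lemma hasDerivAt_condPr {P : ℝ → Ω → ℝ} {P' : Ω → ℝ} {θ : ℝ}
    (h : ∀ ω, HasDerivAt (fun θ => P θ ω) (P' ω) θ) (E F : Ω → Prop)
    (hF : pr (P θ) F ≠ 0) :
    HasDerivAt (fun θ => condPr (P θ) E F)
      ((pr P' (fun ω => E ω ∧ F ω) * pr (P θ) F -
        pr (P θ) (fun ω => E ω ∧ F ω) * pr P' F) / (pr (P θ) F) ^ 2) θ :=
  (hasDerivAt_pr h _).div (hasDerivAt_pr h F) hF

lemma group_sum {V : Type} [Fintype V] (P : Ω → ℝ) (val : Ω → V) (g : V → ℝ) :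
    ∑ ω, P ω * g (val ω) = ∑ v, pr P (fun ω => val ω = v) * g v := by
  symm
  calc ∑ v, pr P (fun ω => val ω = v) * g v
      = ∑ v, ∑ ω, (if val ω = v then P ω * g v else 0) := by
        refine Finset.sum_congr rfl fun v _ => ?_
        rw [pr, Finset.sum_mul]
        exact Finset.sum_congr rfl fun ω _ => by by_cases h : val ω = v <;> simp [h]
    _ = ∑ ω, ∑ v, (if val ω = v then P ω * g v else 0) := Finset.sum_comm
    _ = ∑ ω, P ω * g (val ω) := by
        refine Finset.sum_congr rfl fun ω _ => ?_
        simp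

lemma pr_sum_fiber {V : Type} [Fintype V] (P : Ω → ℝ) (val : Ω → V) (F : Ω → Prop) :
    ∑ v, pr P (fun ω => val ω = v ∧ F ω) = pr P F := by
  unfold pr
  rw [Finset.sum_comm]
  refine Finset.sum_congr rfl fun ω _ => ?_
  by_cases hF : F ω <;> simp [hF]

end PrHelpers

set_option linter.unusedSectionVars false

/-- The policy factor of the joint pmf evaluated along a trajectory. -/
def piAt (π : ℝ → JPol T Z S U) (θ : ℝ) (t : Fin T) (ω : Traj T X Y Z S U) : ℝ :=
  π θ t (histIncl (trZ ω) t) (hist (trS ω) t) (hist (trU ω) t) (trU ω t, trS ω t)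

/-- The θ-independent kernel factor of the joint pmf. -/
def Kpart (K : Kernels X Y Z U) (ω : Traj T X Y Z S U) : ℝ :=
  ∏ t : Fin T,
    K.PY (prevO (trY ω) t) (trY ω t) *
    K.PX (prev3 (trX ω) (trY ω) (trU ω) t) (trX ω t) *
    K.PZ (trX ω t) (trZ ω t)

lemma jointP_eq (K : Kernels X Y Z U) (π : ℝ → JPol T Z S U) (θ : ℝ)
    (ω : Traj T X Y Z S U) : jointP K π θ ω = Kpart K ω * ∏ t, piAt π θ t ω := by
  obtain ⟨x, y, z, s, u⟩ := ω
  simp only [jointP, Kpart, piAt, trX, trY, trZ, trS, trU]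
  rw [← Finset.prod_mul_distrib]

def dpi (π : ℝ → JPol T Z S U) (θ : ℝ) (t : Fin T) (ω : Traj T X Y Z S U) : ℝ :=
  deriv (fun θ => piAt π θ t ω) θ

/-- The score function `Σ_t (d/dθ π_t)/π_t`. -/
def score (π : ℝ → JPol T Z S U) (θ : ℝ) (ω : Traj T X Y Z S U) : ℝ :=
  ∑ t, dpi π θ t ω / piAt π θ t ω

lemma jointP_pos (K : Kernels X Y Z U) (hPY : ∀ p y, 0 < K.PY p y)
    (hPX : ∀ p x, 0 < K.PX p x) (hPZ : ∀ x z, 0 < K.PZ x z)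
    (π : ℝ → JPol T Z S U) (hπpos : ∀ θ t zs ss us v, 0 < π θ t zs ss us v)
    (θ : ℝ) (ω : Traj T X Y Z S U) : 0 < jointP K π θ ω := by
  obtain ⟨x, y, z, s, u⟩ := ω
  exact Finset.prod_pos fun t _ =>
    mul_pos (mul_pos (mul_pos (hPY _ _) (hPX _ _)) (hPZ _ _)) (hπpos _ _ _ _ _ _)

lemma hasDerivAt_jointP (K : Kernels X Y Z U) (π : ℝ → JPol T Z S U)
    (hπpos : ∀ θ t zs ss us v, 0 < π θ t zs ss us v)
    (hπdiff : ∀ t zs ss us v, Differentiable ℝ (fun θ => π θ t zs ss us v))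
    (θ : ℝ) (ω : Traj T X Y Z S U) :
    HasDerivAt (fun θ => jointP K π θ ω) (jointP K π θ ω * score π θ ω) θ := by
  have hπd : ∀ t, HasDerivAt (fun θ => piAt π θ t ω) (dpi π θ t ω) θ := fun t =>
    (hπdiff t (histIncl (trZ ω) t) (hist (trS ω) t) (hist (trU ω) t)
      (trU ω t, trS ω t) θ).hasDerivAt
  have h1 : HasDerivAt (fun θ => ∏ t, piAt π θ t ω)
      (∑ t, (∏ j ∈ Finset.univ.erase t, piAt π θ j ω) * dpi π θ t ω) θ := by
    have := HasDerivAt.fun_finsetProd (u := Finset.univ)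
      (f := fun t θ => piAt π θ t ω) (f' := fun t => dpi π θ t ω) (fun t _ => hπd t)
    simpa [smul_eq_mul] using this
  have h2 : (∑ t, (∏ j ∈ Finset.univ.erase t, piAt π θ j ω) * dpi π θ t ω)
      = (∏ t, piAt π θ t ω) * score π θ ω := by
    rw [score, Finset.mul_sum]
    refine Finset.sum_congr rfl fun t _ => ?_
    have hne : piAt π θ t ω ≠ 0 := (hπpos θ t _ _ _ _).ne'
    rw [← Finset.prod_erase_mul Finset.univ _ (Finset.mem_univ t)]
    field_simp
  rw [h2] at h1
  have h3 := h1.const_mul (Kpart K ω)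
  simp only [← jointP_eq] at h3
  simpa [jointP_eq, mul_assoc] using h3

lemma exists_traj [Nonempty X] [Nonempty Y] [Nonempty Z] [Nonempty S] [Nonempty U]
    (t : Fin T) (s : S) (fy : Fin t.1 → Y) (fs : Fin t.1 → S) (fu : Fin t.1 → U) :
    ∃ ω : Traj T X Y Z S U, trS ω t = s ∧ hist (trY ω) t = fy ∧
      hist (trS ω) t = fs ∧ hist (trU ω) t = fu := by
  classical
  refine ⟨(fun _ => Classical.arbitrary X,
          fun i => if h : i.1 < t.1 then fy ⟨i.1, h⟩ else Classical.arbitrary Y,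
          fun _ => Classical.arbitrary Z,
          fun i => if h : i.1 < t.1 then fs ⟨i.1, h⟩ else s,
          fun i => if h : i.1 < t.1 then fu ⟨i.1, h⟩ else Classical.arbitrary U),
      ?_, ?_, ?_, ?_⟩
  · simp [trS]
  · funext i; simp [trY, hist, i.2]
  · funext i; simp [trS, hist, i.2]
  · funext i; simp [trU, hist, i.2]

/-- Event `S_t = s`. -/
def ESt (t : Fin T) (s : S) : Traj T X Y Z S U → Prop := fun ω' => trS ω' t = s

/-- Event fixing `(y^{t-1}, s^{t-1}, u^{t-1})`. -/
def FA (t : Fin T) (f : (Fin t.1 → Y) × (Fin t.1 → S) × (Fin t.1 → U)) :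
    Traj T X Y Z S U → Prop :=
  fun ω' => hist (trY ω') t = f.1 ∧ hist (trS ω') t = f.2.1 ∧ hist (trU ω') t = f.2.2

/-- Event fixing `(s^{t-1}, u^{t-1})`. -/
def FB (t : Fin T) (f : (Fin t.1 → S) × (Fin t.1 → U)) : Traj T X Y Z S U → Prop :=
  fun ω' => hist (trS ω') t = f.1 ∧ hist (trU ω') t = f.2

def Acond (K : Kernels X Y Z U) (π : ℝ → JPol T Z S U) (θ : ℝ) (t : Fin T)
    (s : S) (f : (Fin t.1 → Y) × (Fin t.1 → S) × (Fin t.1 → U)) : ℝ :=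
  condPr (jointP K π θ) (ESt t s) (FA t f)

def Bcond (K : Kernels X Y Z U) (π : ℝ → JPol T Z S U) (θ : ℝ) (t : Fin T)
    (s : S) (f : (Fin t.1 → S) × (Fin t.1 → U)) : ℝ :=
  condPr (jointP K π θ) (ESt t s) (FB t f)

lemma cinfo_eq (K : Kernels X Y Z U) (π : ℝ → JPol T Z S U) (θ : ℝ) (t : Fin T)
    (ω : Traj T X Y Z S U) :
    cinfo K π θ t ω = Real.log
      (Acond K π θ t (trS ω t) (hist (trY ω) t, hist (trS ω) t, hist (trU ω) t) /
       Bcond K π θ t (trS ω t) (hist (trS ω) t, hist (trU ω) t)) := rfl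

def valA (t : Fin T) (ω : Traj T X Y Z S U) :
    S × ((Fin t.1 → Y) × (Fin t.1 → S) × (Fin t.1 → U)) :=
  (trS ω t, (hist (trY ω) t, hist (trS ω) t, hist (trU ω) t))

def valB (t : Fin T) (ω : Traj T X Y Z S U) :
    S × ((Fin t.1 → S) × (Fin t.1 → U)) :=
  (trS ω t, (hist (trS ω) t, hist (trU ω) t))

def gA' (K : Kernels X Y Z U) (π : ℝ → JPol T Z S U) (θ₀ : ℝ) (t : Fin T)
    (v : S × ((Fin t.1 → Y) × (Fin t.1 → S) × (Fin t.1 → U))) : ℝ :=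
  deriv (fun θ => Acond K π θ t v.1 v.2) θ₀ / Acond K π θ₀ t v.1 v.2

def gB' (K : Kernels X Y Z U) (π : ℝ → JPol T Z S U) (θ₀ : ℝ) (t : Fin T)
    (v : S × ((Fin t.1 → S) × (Fin t.1 → U))) : ℝ :=
  deriv (fun θ => Bcond K π θ t v.1 v.2) θ₀ / Bcond K π θ₀ t v.1 v.2

def gA (K : Kernels X Y Z U) (π : ℝ → JPol T Z S U) (θ₀ : ℝ) (t : Fin T)
    (ω : Traj T X Y Z S U) : ℝ := gA' K π θ₀ t (valA t ω)

def gB (K : Kernels X Y Z U) (π : ℝ → JPol T Z S U) (θ₀ : ℝ) (t : Fin T)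
    (ω : Traj T X Y Z S U) : ℝ := gB' K π θ₀ t (valB t ω)


/-- Policy-gradient formula: under strict positivity of all
kernels and of the differentiable θ-parameterized joint policy, the derivative
of `θ ↦ E_θ[ Σ_t ( c(X_t,U_t) + λ c_{i,θ}(S_t, Y^{t-1}, S^{t-1}, U^{t-1}) ) ]`
at `θ₀` equals
`E_{θ₀}[ ( Σ_t ( c(X_t,U_t) + λ c_{i,θ₀} ) ) · ( Σ_t d/dθ|_{θ₀} log π_{θ,t}(U_t, S_t | Z^t, S^{t-1}, U^{t-1}) ) ]`. -/
theorem policy_gradient_formula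
    [Nonempty X] [Nonempty Y] [Nonempty Z] [Nonempty S] [Nonempty U]
    (hT : 1 ≤ T) (K : Kernels X Y Z U)
    (hPY : ∀ p y, 0 < K.PY p y) (hPX : ∀ p x, 0 < K.PX p x)
    (hPZ : ∀ x z, 0 < K.PZ x z)
    (π : ℝ → JPol T Z S U)
    (hπpos : ∀ θ t zs ss us v, 0 < π θ t zs ss us v)
    (hπsum : ∀ θ t zs ss us, ∑ v : U × S, π θ t zs ss us v = 1)
    (hπdiff : ∀ t zs ss us v, Differentiable ℝ (fun θ => π θ t zs ss us v))
    (c : X × U → ℝ) (lam : ℝ) (θ₀ : ℝ) :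
    HasDerivAt
      (fun θ => ∑ ω : Traj T X Y Z S U, jointP K π θ ω *
        ∑ t : Fin T, (c (trX ω t, trU ω t) + lam * cinfo K π θ t ω))
      (∑ ω : Traj T X Y Z S U, jointP K π θ₀ ω *
        ((∑ t : Fin T, (c (trX ω t, trU ω t) + lam * cinfo K π θ₀ t ω)) *
         (∑ t : Fin T, deriv (fun θ => Real.log
            (π θ t (histIncl (trZ ω) t) (hist (trS ω) t) (hist (trU ω) t)
              (trU ω t, trS ω t))) θ₀)))
      θ₀ := by
  classical
  have hQpos : ∀ θ ω, 0 < jointP K π θ ω := jointP_pos K hPY hPX hPZ π hπpos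
  have hQd : ∀ θ (ω : Traj T X Y Z S U),
      HasDerivAt (fun θ => jointP K π θ ω) (jointP K π θ ω * score π θ ω) θ :=
    fun θ ω => hasDerivAt_jointP K π hπpos hπdiff θ ω
  -- positivity of the conditioning events
  have hFApos : ∀ (θ : ℝ) (t : Fin T) f,
      0 < pr (jointP K π θ) (FA (X := X) (Z := Z) t f) := by
    intro θ t f
    obtain ⟨ω, _, h1, h2, h3⟩ :=
      exists_traj (X := X) (Z := Z) t (Classical.arbitrary S) f.1 f.2.1 f.2.2
    exact pr_pos (hQpos θ) ⟨ω, h1, h2, h3⟩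
  have hFBpos : ∀ (θ : ℝ) (t : Fin T) f,
      0 < pr (jointP K π θ) (FB (X := X) (Y := Y) (Z := Z) t f) := by
    intro θ t f
    obtain ⟨ω, _, _, h2, h3⟩ :=
      exists_traj (X := X) (Z := Z) t (Classical.arbitrary S)
        (fun _ => Classical.arbitrary Y) f.1 f.2
    exact pr_pos (hQpos θ) ⟨ω, h2, h3⟩
  have hEFApos : ∀ (θ : ℝ) (t : Fin T) (s : S) f,
      0 < pr (jointP K π θ) (fun ω => ESt t s ω ∧ FA t f ω) := by
    intro θ t s f
    obtain ⟨ω, h0, h1, h2, h3⟩ := exists_traj (X := X) (Z := Z) t s f.1 f.2.1 f.2.2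
    exact pr_pos (hQpos θ) ⟨ω, h0, h1, h2, h3⟩
  have hEFBpos : ∀ (θ : ℝ) (t : Fin T) (s : S) f,
      0 < pr (jointP K π θ) (fun ω => ESt t s ω ∧ FB t f ω) := by
    intro θ t s f
    obtain ⟨ω, h0, _, h2, h3⟩ :=
      exists_traj (X := X) (Z := Z) t s (fun _ => Classical.arbitrary Y) f.1 f.2
    exact pr_pos (hQpos θ) ⟨ω, h0, h2, h3⟩
  have hApos : ∀ θ (t : Fin T) s f, 0 < Acond K π θ t s f :=
    fun θ t s f => div_pos (hEFApos θ t s f) (hFApos θ t f)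
  have hBpos : ∀ θ (t : Fin T) s f, 0 < Bcond K π θ t s f :=
    fun θ t s f => div_pos (hEFBpos θ t s f) (hFBpos θ t f)
  -- normalization of the conditional laws
  have hAsum : ∀ θ (t : Fin T) f, ∑ s, Acond K π θ t s f = 1 := by
    intro θ t f
    simp only [Acond, condPr, ESt]
    rw [← Finset.sum_div,
      pr_sum_fiber (jointP K π θ) (fun ω => trS ω t) (FA t f)]
    exact div_self (hFApos θ t f).ne'
  have hBsum : ∀ θ (t : Fin T) f, ∑ s, Bcond K π θ t s f = 1 := by
    intro θ t f
    simp only [Bcond, condPr, ESt]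
    rw [← Finset.sum_div,
      pr_sum_fiber (jointP K π θ) (fun ω => trS ω t) (FB t f)]
    exact div_self (hFBpos θ t f).ne'
  -- differentiability of the conditional laws
  have hAdiff : ∀ θ (t : Fin T) s f, HasDerivAt (fun θ => Acond K π θ t s f)
      (deriv (fun θ => Acond K π θ t s f) θ) θ := by
    intro θ t s f
    have h := hasDerivAt_condPr (P' := fun ω => jointP K π θ ω * score π θ ω)
      (fun ω => hQd θ ω) (ESt t s) (FA t f) (hFApos θ t f).ne'
    exact h.differentiableAt.hasDerivAt
  have hBdiff : ∀ θ (t : Fin T) s f, HasDerivAt (fun θ => Bcond K π θ t s f)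
      (deriv (fun θ => Bcond K π θ t s f) θ) θ := by
    intro θ t s f
    have h := hasDerivAt_condPr (P' := fun ω => jointP K π θ ω * score π θ ω)
      (fun ω => hQd θ ω) (ESt t s) (FB t f) (hFBpos θ t f).ne'
    exact h.differentiableAt.hasDerivAt
  -- the expected score of each conditional law vanishes
  have hAder0 : ∀ (t : Fin T) f, ∑ s, deriv (fun θ => Acond K π θ t s f) θ₀ = 0 := by
    intro t f
    have h1 : HasDerivAt (fun θ => ∑ s, Acond K π θ t s f)
        (∑ s, deriv (fun θ => Acond K π θ t s f) θ₀) θ₀ :=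
      HasDerivAt.fun_sum fun s _ => hAdiff θ₀ t s f
    have h2 : (fun θ => ∑ s, Acond K π θ t s f) = fun _ => (1:ℝ) :=
      funext fun θ => hAsum θ t f
    rw [h2] at h1
    exact h1.unique (hasDerivAt_const θ₀ 1)
  have hBder0 : ∀ (t : Fin T) f, ∑ s, deriv (fun θ => Bcond K π θ t s f) θ₀ = 0 := by
    intro t f
    have h1 : HasDerivAt (fun θ => ∑ s, Bcond K π θ t s f)
        (∑ s, deriv (fun θ => Bcond K π θ t s f) θ₀) θ₀ :=
      HasDerivAt.fun_sum fun s _ => hBdiff θ₀ t s f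
    have h2 : (fun θ => ∑ s, Bcond K π θ t s f) = fun _ => (1:ℝ) :=
      funext fun θ => hBsum θ t f
    rw [h2] at h1
    exact h1.unique (hasDerivAt_const θ₀ 1)
  -- derivative of the information cost
  have hcid : ∀ (t : Fin T) (ω : Traj T X Y Z S U),
      HasDerivAt (fun θ => cinfo K π θ t ω)
        (gA K π θ₀ t ω - gB K π θ₀ t ω) θ₀ := by
    intro t ω
    have hfn : (fun θ => cinfo K π θ t ω) = fun θ =>
        Real.log (Acond K π θ t (trS ω t)
          (hist (trY ω) t, hist (trS ω) t, hist (trU ω) t)) -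
        Real.log (Bcond K π θ t (trS ω t) (hist (trS ω) t, hist (trU ω) t)) := by
      funext θ
      rw [cinfo_eq, Real.log_div (hApos θ t _ _).ne' (hBpos θ t _ _).ne']
    rw [hfn]
    exact ((hAdiff θ₀ t _ _).log (hApos θ₀ t _ _).ne').sub
      ((hBdiff θ₀ t _ _).log (hBpos θ₀ t _ _).ne')
  -- derivative of the per-trajectory cost
  have hGd : ∀ ω : Traj T X Y Z S U, HasDerivAt
      (fun θ => ∑ t : Fin T, (c (trX ω t, trU ω t) + lam * cinfo K π θ t ω))
      (∑ t : Fin T, lam * (gA K π θ₀ t ω - gB K π θ₀ t ω)) θ₀ :=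
    fun ω => HasDerivAt.fun_sum fun t _ =>
      ((hcid t ω).const_mul lam).const_add (c (trX ω t, trU ω t))
  -- total derivative
  have hFd : HasDerivAt
      (fun θ => ∑ ω : Traj T X Y Z S U, jointP K π θ ω *
        ∑ t : Fin T, (c (trX ω t, trU ω t) + lam * cinfo K π θ t ω))
      (∑ ω : Traj T X Y Z S U,
        (jointP K π θ₀ ω * score π θ₀ ω *
            (∑ t : Fin T, (c (trX ω t, trU ω t) + lam * cinfo K π θ₀ t ω)) +
         jointP K π θ₀ ω * ∑ t : Fin T, lam * (gA K π θ₀ t ω - gB K π θ₀ t ω))) θ₀ :=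
    HasDerivAt.fun_sum fun ω _ => (hQd θ₀ ω).mul (hGd ω)
  -- zero expectation of the information-cost score
  have hzeroA : ∀ t : Fin T,
      ∑ ω : Traj T X Y Z S U, jointP K π θ₀ ω * gA K π θ₀ t ω = 0 := by
    intro t
    have hg : ∑ ω : Traj T X Y Z S U, jointP K π θ₀ ω * gA K π θ₀ t ω
        = ∑ v, pr (jointP K π θ₀) (fun ω => valA t ω = v) * gA' K π θ₀ t v := by
      simp only [gA]
      exact group_sum _ _ _
    rw [hg, Fintype.sum_prod_type, Finset.sum_comm]
    apply Finset.sum_eq_zero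
    intro f _
    have hsum : ∀ s, pr (jointP K π θ₀) (fun ω => valA t ω = (s, f)) * gA' K π θ₀ t (s, f)
        = pr (jointP K π θ₀) (FA t f) * deriv (fun θ => Acond K π θ t s f) θ₀ := by
      intro s
      have hpr : pr (jointP K π θ₀) (fun ω => valA t ω = (s, f)) =
          Acond K π θ₀ t s f * pr (jointP K π θ₀) (FA t f) := by
        rw [pr_congr (jointP K π θ₀) (E := fun ω => valA t ω = (s, f))
          (E' := fun ω => ESt t s ω ∧ FA t f ω)
          (fun ω => by simp [valA, ESt, FA, Prod.ext_iff])]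
        simp only [Acond, condPr]
        rw [div_mul_cancel₀ _ (hFApos θ₀ t f).ne']
      rw [hpr]
      simp only [gA']
      have hAne : Acond K π θ₀ t s f ≠ 0 := (hApos θ₀ t s f).ne'
      field_simp
    calc ∑ s, pr (jointP K π θ₀) (fun ω => valA t ω = (s, f)) * gA' K π θ₀ t (s, f)
        = ∑ s, pr (jointP K π θ₀) (FA t f) * deriv (fun θ => Acond K π θ t s f) θ₀ :=
          Finset.sum_congr rfl fun s _ => hsum s
      _ = pr (jointP K π θ₀) (FA t f) * ∑ s, deriv (fun θ => Acond K π θ t s f) θ₀ :=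
          (Finset.mul_sum _ _ _).symm
      _ = 0 := by rw [hAder0 t f, mul_zero]
  have hzeroB : ∀ t : Fin T,
      ∑ ω : Traj T X Y Z S U, jointP K π θ₀ ω * gB K π θ₀ t ω = 0 := by
    intro t
    have hg : ∑ ω : Traj T X Y Z S U, jointP K π θ₀ ω * gB K π θ₀ t ω
        = ∑ v, pr (jointP K π θ₀) (fun ω => valB t ω = v) * gB' K π θ₀ t v := by
      simp only [gB]
      exact group_sum _ _ _
    rw [hg, Fintype.sum_prod_type, Finset.sum_comm]
    apply Finset.sum_eq_zero
    intro f _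
    have hsum : ∀ s, pr (jointP K π θ₀) (fun ω => valB t ω = (s, f)) * gB' K π θ₀ t (s, f)
        = pr (jointP K π θ₀) (FB t f) * deriv (fun θ => Bcond K π θ t s f) θ₀ := by
      intro s
      have hpr : pr (jointP K π θ₀) (fun ω => valB t ω = (s, f)) =
          Bcond K π θ₀ t s f * pr (jointP K π θ₀) (FB t f) := by
        rw [pr_congr (jointP K π θ₀) (E := fun ω => valB t ω = (s, f))
          (E' := fun ω => ESt t s ω ∧ FB t f ω)
          (fun ω => by simp [valB, ESt, FB, Prod.ext_iff])]
        simp only [Bcond, condPr]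
        rw [div_mul_cancel₀ _ (hFBpos θ₀ t f).ne']
      rw [hpr]
      simp only [gB']
      have hBne : Bcond K π θ₀ t s f ≠ 0 := (hBpos θ₀ t s f).ne'
      field_simp
    calc ∑ s, pr (jointP K π θ₀) (fun ω => valB t ω = (s, f)) * gB' K π θ₀ t (s, f)
        = ∑ s, pr (jointP K π θ₀) (FB t f) * deriv (fun θ => Bcond K π θ t s f) θ₀ :=
          Finset.sum_congr rfl fun s _ => hsum s
      _ = pr (jointP K π θ₀) (FB t f) * ∑ s, deriv (fun θ => Bcond K π θ t s f) θ₀ :=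
          (Finset.mul_sum _ _ _).symm
      _ = 0 := by rw [hBder0 t f, mul_zero]
  have hzero : ∑ ω : Traj T X Y Z S U, jointP K π θ₀ ω *
      ∑ t : Fin T, lam * (gA K π θ₀ t ω - gB K π θ₀ t ω) = 0 := by
    have h1 : ∀ ω : Traj T X Y Z S U, jointP K π θ₀ ω *
        ∑ t : Fin T, lam * (gA K π θ₀ t ω - gB K π θ₀ t ω)
        = ∑ t : Fin T, (lam * (jointP K π θ₀ ω * gA K π θ₀ t ω) -
            lam * (jointP K π θ₀ ω * gB K π θ₀ t ω)) := by
      intro ω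
      rw [Finset.mul_sum]
      exact Finset.sum_congr rfl fun t _ => by ring
    calc ∑ ω : Traj T X Y Z S U, jointP K π θ₀ ω *
          ∑ t : Fin T, lam * (gA K π θ₀ t ω - gB K π θ₀ t ω)
        = ∑ ω : Traj T X Y Z S U, ∑ t : Fin T,
            (lam * (jointP K π θ₀ ω * gA K π θ₀ t ω) -
             lam * (jointP K π θ₀ ω * gB K π θ₀ t ω)) :=
          Finset.sum_congr rfl fun ω _ => h1 ω
      _ = ∑ t : Fin T, ∑ ω : Traj T X Y Z S U,
            (lam * (jointP K π θ₀ ω * gA K π θ₀ t ω) -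
             lam * (jointP K π θ₀ ω * gB K π θ₀ t ω)) := Finset.sum_comm
      _ = 0 := by
          apply Finset.sum_eq_zero
          intro t _
          rw [Finset.sum_sub_distrib, ← Finset.mul_sum, ← Finset.mul_sum,
            hzeroA t, hzeroB t]
          simp
  -- the target score sum equals the score function
  have hscoreT : ∀ ω : Traj T X Y Z S U,
      (∑ t : Fin T, deriv (fun θ => Real.log
        (π θ t (histIncl (trZ ω) t) (hist (trS ω) t) (hist (trU ω) t)
          (trU ω t, trS ω t))) θ₀) = score π θ₀ ω := by
    intro ω
    refine Finset.sum_congr rfl fun t _ => ?_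
    have hd : HasDerivAt (fun θ => piAt π θ t ω) (dpi π θ₀ t ω) θ₀ :=
      (hπdiff t (histIncl (trZ ω) t) (hist (trS ω) t) (hist (trU ω) t)
        (trU ω t, trS ω t) θ₀).hasDerivAt
    exact (hd.log (hπpos θ₀ t _ _ _ _).ne').deriv
  -- conclude
  have heq : (∑ ω : Traj T X Y Z S U, jointP K π θ₀ ω *
        ((∑ t : Fin T, (c (trX ω t, trU ω t) + lam * cinfo K π θ₀ t ω)) *
         (∑ t : Fin T, deriv (fun θ => Real.log
            (π θ t (histIncl (trZ ω) t) (hist (trS ω) t) (hist (trU ω) t)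
              (trU ω t, trS ω t))) θ₀)))
      = ∑ ω : Traj T X Y Z S U,
        (jointP K π θ₀ ω * score π θ₀ ω *
            (∑ t : Fin T, (c (trX ω t, trU ω t) + lam * cinfo K π θ₀ t ω)) +
         jointP K π θ₀ ω * ∑ t : Fin T, lam * (gA K π θ₀ t ω - gB K π θ₀ t ω)) := by
    rw [Finset.sum_add_distrib, hzero, add_zero]
    refine Finset.sum_congr rfl fun ω _ => ?_
    rw [hscoreT ω]
    ring
  rw [heq]
  exact hFd


end NCS
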